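/- Let m ∈ ℝ and let f : ℝ³∖{0} → ℝ be C² satisfying Euler's homogeneity identity ⟨x, ∇f(x)⟩ = m f(x) for all x ≠ 0. Suppose there are functions g̃ : ℝ² → ℝ, h : ℝ → ℝ, and a C¹ function α : ℝ³∖{0} → ℝ such that for all x ≠ 0: ‖∇f(x)‖² = g̃(f(x), ‖x‖) > 0 and α(x)² · ( g̃(f(x),‖x‖) ‖x‖² − m² f(x)² ) = 2 h(f(x)) · g̃(f(x), ‖x‖). Define v(x) = ( α(x) / g̃(f(x),‖x‖) ) · ( g̃(f(x),‖x‖) · x − m f(x) ∇f(x) ). Then along every solution x : I → ℝ³∖{0} of ẋ = v(x): f(x(t)) is constant, and g̃( f(x(t)), ‖x(t)‖ ) · ‖ x(t) × ẋ(t) ‖² = 2 m² f(x(t))² h( f(x(t)) ) for all t ∈ I; in particular g̃(f,‖x‖)·‖x × ẋ‖² is a first integral of the flow, so the geodesic flow on the homogeneous surface f = c with ‖∇f‖² a function of (f, ‖x‖) is integrable. -/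

import Mathlib

/-!
Euler's identity `⟨x, ∇f⟩ = m f` and `‖∇f‖² = g̃` turn the field (20) into
`(α / g̃) • ∇f × (x × ∇f)`. This is orthogonal to `∇f`, so `f` is constant along the flow, and
its cross product with `x` is `-(α m f / g̃) • x × ∇f`. Lagrange's identity
`‖x × ∇f‖² = ‖x‖² g̃ - m² f²` and the relation defining `α` then give the value `2 m² f² h(f)`.
-/

open Real Set

noncomputable section

/-- Partial derivative in the `k`-th coordinate direction. -/
def pd (k : Fin 3) (f : (Fin 3 → ℝ) → ℝ) (x : Fin 3 → ℝ) : ℝ :=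
  fderiv ℝ f x (Pi.single k 1)

/-- Gradient. -/
def grad (f : (Fin 3 → ℝ) → ℝ) (x : Fin 3 → ℝ) : Fin 3 → ℝ := fun k => pd k f x

/-- Euclidean inner product on ℝ³. -/
def dot (a b : Fin 3 → ℝ) : ℝ := ∑ i, a i * b i

/-- Squared Euclidean norm on ℝ³. -/
def nsq (a : Fin 3 → ℝ) : ℝ := ∑ i, a i ^ 2

/-- Cross product on ℝ³. -/
def cross (a b : Fin 3 → ℝ) : Fin 3 → ℝ :=
  ![a 1 * b 2 - a 2 * b 1, a 2 * b 0 - a 0 * b 2, a 0 * b 1 - a 1 * b 0]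

/-- Curl of a vector field on ℝ³. -/
def rot (u : (Fin 3 → ℝ) → (Fin 3 → ℝ)) (x : Fin 3 → ℝ) : Fin 3 → ℝ :=
  ![pd 1 (fun y => u y 2) x - pd 2 (fun y => u y 1) x,
    pd 2 (fun y => u y 0) x - pd 0 (fun y => u y 2) x,
    pd 0 (fun y => u y 1) x - pd 1 (fun y => u y 0) x]

/-- Euclidean norm on ℝ³. -/
def nrm (x : Fin 3 → ℝ) : ℝ := Real.sqrt (∑ i, x i ^ 2)

open Matrix

lemma dot_eq_dotProduct (a b : Fin 3 → ℝ) : dot a b = a ⬝ᵥ b := rfl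

lemma nsq_eq_dotProduct_self (a : Fin 3 → ℝ) : nsq a = a ⬝ᵥ a := by
  simp [nsq, dotProduct, sq]

lemma cross_eq_crossProduct (a b : Fin 3 → ℝ) : cross a b = a ⨯₃ b := rfl

lemma nrm_sq (a : Fin 3 → ℝ) : nrm a ^ 2 = nsq a :=
  sq_sqrt (Finset.sum_nonneg fun i _ => sq_nonneg (a i))

lemma fderiv_apply_eq_dot_grad (f : (Fin 3 → ℝ) → ℝ) (y u : Fin 3 → ℝ) :
    fderiv ℝ f y u = dot u (grad f y) := by
  conv_lhs => rw [pi_eq_sum_univ' u]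
  simp [dot, grad, pd]

lemma hasDerivAt_comp_dot_grad {f : (Fin 3 → ℝ) → ℝ} {x : ℝ → Fin 3 → ℝ} {x' : Fin 3 → ℝ}
    {t : ℝ} (hf : DifferentiableAt ℝ f (x t)) (hx : HasDerivAt x x' t) :
    HasDerivAt (fun s => f (x s)) (dot x' (grad f (x t))) t := by
  rw [← fderiv_apply_eq_dot_grad]
  exact hf.hasFDerivAt.comp_hasDerivAt t hx

section CrossProduct

variable {R : Type*} [CommRing R]

lemma dotProduct_smul_cross_cross_self (s : R) (a b : Fin 3 → R) :
    s • (b ⨯₃ (a ⨯₃ b)) ⬝ᵥ b = 0 := by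
  rw [smul_dotProduct, dotProduct_comm, dot_self_cross, smul_zero]

lemma cross_smul_cross_cross_self (s : R) (a b : Fin 3 → R) :
    a ⨯₃ (s • (b ⨯₃ (a ⨯₃ b))) = -(s * (a ⬝ᵥ b)) • (a ⨯₃ b) := by
  rw [cross_cross_eq_smul_sub_smul', map_smul, map_sub, map_smul, map_smul, cross_self]
  module

lemma dotProduct_self_cross_smul_cross_cross_self (s : R) (a b : Fin 3 → R) :
    a ⨯₃ (s • (b ⨯₃ (a ⨯₃ b))) ⬝ᵥ a ⨯₃ (s • (b ⨯₃ (a ⨯₃ b)))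
      = (s * (a ⬝ᵥ b)) ^ 2 * ((a ⬝ᵥ a) * (b ⬝ᵥ b) - (a ⬝ᵥ b) ^ 2) := by
  rw [cross_smul_cross_cross_self, smul_dotProduct, dotProduct_smul, cross_dot_cross,
    smul_eq_mul, smul_eq_mul, dotProduct_comm b a]
  ring

end CrossProduct

theorem homogeneous_surface_geodesic_integrable_general
    (m : ℝ) (f : (Fin 3 → ℝ) → ℝ)
    (hfC : ContDiffOn ℝ 2 f {x : Fin 3 → ℝ | x ≠ 0})
    -- Euler's homogeneity identity
    (heuler : ∀ x : Fin 3 → ℝ, x ≠ 0 → dot x (grad f x) = m * f x)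
    (gt : ℝ × ℝ → ℝ) (h : ℝ → ℝ)
    (α : (Fin 3 → ℝ) → ℝ)
    (hg : ∀ x : Fin 3 → ℝ, x ≠ 0 → nsq (grad f x) = gt (f x, nrm x))
    (hgpos : ∀ x : Fin 3 → ℝ, x ≠ 0 → 0 < gt (f x, nrm x))
    (hα : ∀ x : Fin 3 → ℝ, x ≠ 0 →
      α x ^ 2 * (gt (f x, nrm x) * nrm x ^ 2 - m ^ 2 * f x ^ 2)
        = 2 * h (f x) * gt (f x, nrm x))
    (v : (Fin 3 → ℝ) → (Fin 3 → ℝ))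
    (hv : ∀ x : Fin 3 → ℝ, v x = fun k =>
      (α x / gt (f x, nrm x)) * (gt (f x, nrm x) * x k - m * f x * grad f x k))
    (t₁ t₂ : ℝ) (x : ℝ → (Fin 3 → ℝ))
    (hx0 : ∀ t ∈ Ioo t₁ t₂, x t ≠ 0)
    (hx : ∀ t ∈ Ioo t₁ t₂, HasDerivAt x (v (x t)) t) :
    (∀ t ∈ Ioo t₁ t₂, ∀ s ∈ Ioo t₁ t₂, f (x t) = f (x s)) ∧
    (∀ t ∈ Ioo t₁ t₂,
      gt (f (x t), nrm (x t)) * nsq (cross (x t) (v (x t)))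
        = 2 * m ^ 2 * f (x t) ^ 2 * h (f (x t))) := by
  have hflow : ∀ y : Fin 3 → ℝ, y ≠ 0 →
      v y = (α y / gt (f y, nrm y)) • (grad f y ⨯₃ (y ⨯₃ grad f y)) := by
    intro y hy
    rw [hv, cross_cross_eq_smul_sub_smul', ← nsq_eq_dotProduct_self, hg y hy,
      ← dot_eq_dotProduct, heuler y hy]
    ext k
    simp only [Pi.smul_apply, Pi.sub_apply, smul_eq_mul, mul_assoc]
  have hdf : ∀ t ∈ Ioo t₁ t₂, HasDerivAt (fun s => f (x s)) 0 t := by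
    intro t ht
    have hfx : DifferentiableAt ℝ f (x t) :=
      (hfC.contDiffAt (isOpen_ne.mem_nhds (hx0 t ht))).differentiableAt (by norm_num)
    have := hasDerivAt_comp_dot_grad hfx (hx t ht)
    rwa [hflow _ (hx0 t ht), dot_eq_dotProduct, dotProduct_smul_cross_cross_self] at this
  refine ⟨fun t ht s hs => isOpen_Ioo.is_const_of_deriv_eq_zero isPreconnected_Ioo
    (fun u hu => (hdf u hu).differentiableAt.differentiableWithinAt)
    (fun u hu => (hdf u hu).deriv) ht hs, fun t ht => ?_⟩
  have hy := hx0 t ht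
  have hαy := hα (x t) hy
  have hgy := (hgpos (x t) hy).ne'
  rw [hflow _ hy, cross_eq_crossProduct, nsq_eq_dotProduct_self,
    dotProduct_self_cross_smul_cross_cross_self, ← dot_eq_dotProduct, heuler _ hy,
    ← nsq_eq_dotProduct_self, ← nsq_eq_dotProduct_self, hg _ hy, ← nrm_sq]
  field_simp
  linear_combination m ^ 2 * f (x t) ^ 2 * hαy

/-- Integrability of the geodesic flow on a homogeneous surface of degree `m` with
`‖∇f‖² = g̃(f, ‖x‖)`: along solutions of the Cartesian flow (20), `f` is constant and
`g̃(f,‖x‖)‖x × ẋ‖² = 2m²f²h(f)` is a first integral. -/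
theorem homogeneous_surface_geodesic_integrable
    (m : ℝ) (f : (Fin 3 → ℝ) → ℝ)
    (hfC : ContDiffOn ℝ 2 f {x : Fin 3 → ℝ | x ≠ 0})
    -- Euler's homogeneity identity
    (heuler : ∀ x : Fin 3 → ℝ, x ≠ 0 → dot x (grad f x) = m * f x)
    (gt : ℝ × ℝ → ℝ) (h : ℝ → ℝ)
    (α : (Fin 3 → ℝ) → ℝ) (hαC : ContDiffOn ℝ 1 α {x : Fin 3 → ℝ | x ≠ 0})
    (hg : ∀ x : Fin 3 → ℝ, x ≠ 0 → nsq (grad f x) = gt (f x, nrm x))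
    (hgpos : ∀ x : Fin 3 → ℝ, x ≠ 0 → 0 < gt (f x, nrm x))
    (hα : ∀ x : Fin 3 → ℝ, x ≠ 0 →
      α x ^ 2 * (gt (f x, nrm x) * nrm x ^ 2 - m ^ 2 * f x ^ 2)
        = 2 * h (f x) * gt (f x, nrm x))
    (v : (Fin 3 → ℝ) → (Fin 3 → ℝ))
    (hv : ∀ x : Fin 3 → ℝ, v x = fun k =>
      (α x / gt (f x, nrm x)) * (gt (f x, nrm x) * x k - m * f x * grad f x k))
    (t₁ t₂ : ℝ) (x : ℝ → (Fin 3 → ℝ))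
    (hx0 : ∀ t ∈ Ioo t₁ t₂, x t ≠ 0)
    (hx : ∀ t ∈ Ioo t₁ t₂, HasDerivAt x (v (x t)) t) :
    (∀ t ∈ Ioo t₁ t₂, ∀ s ∈ Ioo t₁ t₂, f (x t) = f (x s)) ∧
    (∀ t ∈ Ioo t₁ t₂,
      gt (f (x t), nrm (x t)) * nsq (cross (x t) (v (x t)))
        = 2 * m ^ 2 * f (x t) ^ 2 * h (f (x t))) :=
  homogeneous_surface_geodesic_integrable_general m f hfC heuler gt h α hg hgpos hα v hv t₁ t₂ x hx0
    hx
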